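/- arXiv:1712.02909 — 8 statements merged into one kernel-verified Lean document; each statement's English description precedes it below -/
import Mathlib

section
/- For any two disjoint coalitions S, T ⊆ N (S ∩ T = ∅), the realized daily storage cost satisfies u(S ∪ T) ≤ u(S) + u(T); that is, the cooperative game (N, u) for storage cost sharing is subadditive. -/
open Finset

/-- Realized daily storage cost of a coalition `S`:
`u(S) = Σ_{i∈S} π_i C_i + πh·(x_S − C_S)⁺ + πl·min(C_S, x_S)`. -/
noncomputable def realizedCost {ι : Type*} (πh πl : ℝ) (π C x : ι → ℝ)
    (S : Finset ι) : ℝ :=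
  ∑ i ∈ S, π i * C i + πh * max ((∑ i ∈ S, x i) - ∑ i ∈ S, C i) 0
    + πl * min (∑ i ∈ S, C i) (∑ i ∈ S, x i)

lemma key_ineq (πh πl A B A' B' : ℝ) (h : πl ≤ πh) :
    πh * max (A + A' - (B + B')) 0 + πl * min (B + B') (A + A') ≤
      (πh * max (A - B) 0 + πl * min B A) + (πh * max (A' - B') 0 + πl * min B' A') := by
  have hmax : ∀ a b : ℝ, max (a - b) 0 = a - min b a := by
    intro a b
    rcases le_total a b with hab | hab
    · rw [max_eq_right (by linarith), min_eq_right hab]; ring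
    · rw [max_eq_left (by linarith), min_eq_left hab]
  rw [hmax, hmax, hmax]
  have hmin : min B A + min B' A' ≤ min (B + B') (A + A') :=
    le_min (by gcongr <;> [exact min_le_left _ _; exact min_le_left _ _])
      (by gcongr <;> [exact min_le_right _ _; exact min_le_right _ _])
  nlinarith [hmin]

/-- The cooperative game `(N, u)` for storage cost sharing is
subadditive: for any two disjoint coalitions `S, T`, `u(S ∪ T) ≤ u(S) + u(T)`. -/
theorem realizedCost_game_subadditive
    {ι : Type*} [DecidableEq ι] (πh πl : ℝ) (hprices : πl < πh) (hπl : 0 ≤ πl)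
    (π C x : ι → ℝ) (hπ : ∀ i, 0 ≤ π i) (hC : ∀ i, 0 ≤ C i) (hx : ∀ i, 0 ≤ x i)
    (S T : Finset ι) (hST : Disjoint S T) :
    realizedCost πh πl π C x (S ∪ T) ≤
      realizedCost πh πl π C x S + realizedCost πh πl π C x T := by
  unfold realizedCost
  rw [sum_union hST, sum_union hST, sum_union hST]
  have := key_ineq πh πl (∑ i ∈ S, x i) (∑ i ∈ S, C i) (∑ i ∈ T, x i) (∑ i ∈ T, C i)
    hprices.le
  linarith
end

section
/- For every balanced map α, Σ_{S ⊆ N, S ≠ ∅} α(S)·u(S) ≥ u(N); that is, the cooperative game (N, u) for storage cost sharing is balanced, and hence by the Bondareva–Shapley theorem its core is nonempty. -/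
open Finset

/-- the game `(N, u)` is balanced: for every balanced map `α`
(a map from nonempty coalitions to `[0,1]` with `Σ_{S ∋ i} α(S) = 1` for every
player `i`), one has `Σ_{∅ ≠ S ⊆ N} α(S)·u(S) ≥ u(N)`. -/
theorem realizedCost_game_balanced
    {ι : Type*} [Fintype ι] [DecidableEq ι]
    (πh πl : ℝ) (hprices : πl < πh) (hπl : 0 ≤ πl)
    (π C x : ι → ℝ) (hπ : ∀ i, 0 ≤ π i) (hC : ∀ i, 0 ≤ C i) (hx : ∀ i, 0 ≤ x i)
    (α : Finset ι → ℝ)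
    (hα : ∀ S : Finset ι, S.Nonempty → α S ∈ Set.Icc (0 : ℝ) 1)
    (hbalanced : ∀ i : ι,
      ∑ S ∈ Finset.univ.filter (fun S : Finset ι => i ∈ S), α S = 1) :
    ∑ S ∈ Finset.univ.filter (fun S : Finset ι => S.Nonempty),
        α S * realizedCost πh πl π C x S ≥
      realizedCost πh πl π C x Finset.univ := by
  classical
  have hd : (0:ℝ) < πh - πl := sub_pos.mpr hprices
  -- Fubini: balanced weights preserve additive functions
  have aux : ∀ g : ι → ℝ,
      ∑ S ∈ Finset.univ.filter (fun S : Finset ι => S.Nonempty),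
        α S * ∑ i ∈ S, g i = ∑ i, g i := by
    intro g
    have h1 : ∑ S ∈ Finset.univ.filter (fun S : Finset ι => S.Nonempty),
        α S * ∑ i ∈ S, g i = ∑ S : Finset ι, α S * ∑ i ∈ S, g i := by
      rw [Finset.sum_filter]
      refine Finset.sum_congr rfl fun S _ => ?_
      by_cases h : S.Nonempty
      · simp [h]
      · simp [Finset.not_nonempty_iff_eq_empty.mp h]
    rw [h1]
    calc ∑ S : Finset ι, α S * ∑ i ∈ S, g i
        = ∑ S : Finset ι, ∑ i ∈ Finset.univ, if i ∈ S then α S * g i else 0 := by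
          refine Finset.sum_congr rfl fun S _ => ?_
          rw [Finset.mul_sum, Finset.sum_ite_mem, Finset.univ_inter]
      _ = ∑ i ∈ Finset.univ, ∑ S : Finset ι, if i ∈ S then α S * g i else 0 :=
          Finset.sum_comm
      _ = ∑ i, g i := by
          refine Finset.sum_congr rfl fun i _ => ?_
          rw [← Finset.sum_filter, ← Finset.sum_mul, hbalanced i, one_mul]
  -- rewrite the cost
  have expand : ∀ S : Finset ι, realizedCost πh πl π C x S =
      (∑ i ∈ S, π i * C i) + πh * (∑ i ∈ S, x i)
        - (πh - πl) * min (∑ i ∈ S, C i) (∑ i ∈ S, x i) := by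
    intro S
    unfold realizedCost
    have hmax : max ((∑ i ∈ S, x i) - ∑ i ∈ S, C i) 0
        = (∑ i ∈ S, x i) - min (∑ i ∈ S, C i) (∑ i ∈ S, x i) := by
      rcases le_total (∑ i ∈ S, x i) (∑ i ∈ S, C i) with h | h
      · rw [min_eq_right h, max_eq_right (by linarith)]; ring
      · rw [min_eq_left h, max_eq_left (by linarith)]
    rw [hmax]; ring
  -- bound the weighted min sum
  have key : ∑ S ∈ Finset.univ.filter (fun S : Finset ι => S.Nonempty),
      α S * min (∑ i ∈ S, C i) (∑ i ∈ S, x i)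
      ≤ min (∑ i, C i) (∑ i, x i) := by
    apply le_min
    · calc ∑ S ∈ Finset.univ.filter (fun S : Finset ι => S.Nonempty),
          α S * min (∑ i ∈ S, C i) (∑ i ∈ S, x i)
          ≤ ∑ S ∈ Finset.univ.filter (fun S : Finset ι => S.Nonempty),
            α S * ∑ i ∈ S, C i := by
            refine Finset.sum_le_sum fun S hS => ?_
            exact mul_le_mul_of_nonneg_left (min_le_left _ _)
              (hα S (Finset.mem_filter.mp hS).2).1
        _ = ∑ i, C i := aux C
    · calc ∑ S ∈ Finset.univ.filter (fun S : Finset ι => S.Nonempty),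
          α S * min (∑ i ∈ S, C i) (∑ i ∈ S, x i)
          ≤ ∑ S ∈ Finset.univ.filter (fun S : Finset ι => S.Nonempty),
            α S * ∑ i ∈ S, x i := by
            refine Finset.sum_le_sum fun S hS => ?_
            exact mul_le_mul_of_nonneg_left (min_le_right _ _)
              (hα S (Finset.mem_filter.mp hS).2).1
        _ = ∑ i, x i := aux x
  have hLHS : ∑ S ∈ Finset.univ.filter (fun S : Finset ι => S.Nonempty),
      α S * realizedCost πh πl π C x S
      = (∑ i, π i * C i) + πh * (∑ i, x i)
        - (πh - πl) * ∑ S ∈ Finset.univ.filter (fun S : Finset ι => S.Nonempty),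
            α S * min (∑ i ∈ S, C i) (∑ i ∈ S, x i) := by
    have : ∀ S ∈ Finset.univ.filter (fun S : Finset ι => S.Nonempty),
        α S * realizedCost πh πl π C x S
        = α S * (∑ i ∈ S, π i * C i) + πh * (α S * ∑ i ∈ S, x i)
          - (πh - πl) * (α S * min (∑ i ∈ S, C i) (∑ i ∈ S, x i)) := by
      intro S _; rw [expand S]; ring
    rw [Finset.sum_congr rfl this, Finset.sum_sub_distrib, Finset.sum_add_distrib,
      ← Finset.mul_sum, ← Finset.mul_sum, aux (fun i => π i * C i), aux x]
  rw [ge_iff_le, hLHS, expand Finset.univ]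
  nlinarith [key, hd]
end

section
/- The cost allocation ξ belongs to the core of the cost-sharing cooperative game (N, u): it is budget balanced, Σ_{i∈N} ξ_i = u(N), and for every coalition S ⊆ N it satisfies Σ_{i∈S} ξ_i ≤ u(S). -/
open Finset

/-- Allocation 1: `ξ_i = π_i C_i + πh (x_i − C_i) + πl C_i` if `x_N ≥ C_N`,
and `ξ_i = π_i C_i + πl x_i` if `x_N < C_N`. -/
noncomputable def xiAlloc {ι : Type*} [Fintype ι] (πh πl : ℝ) (π C x : ι → ℝ)
    (i : ι) : ℝ :=
  if (∑ j, C j) ≤ ∑ j, x j then π i * C i + πh * (x i - C i) + πl * C i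
  else π i * C i + πl * x i

/-- the cost allocation `ξ` belongs to the core of the cost-sharing
cooperative game `(N, u)`: it is budget balanced, `Σ_{i∈N} ξ_i = u(N)`, and for
every coalition `S ⊆ N`, `Σ_{i∈S} ξ_i ≤ u(S)`. -/
theorem xiAlloc_in_core
    {ι : Type*} [Fintype ι] (πh πl : ℝ) (hprices : πl < πh) (hπl : 0 ≤ πl)
    (π C x : ι → ℝ) (hπ : ∀ i, 0 ≤ π i) (hC : ∀ i, 0 ≤ C i) (hx : ∀ i, 0 ≤ x i) :
    (∑ i, xiAlloc πh πl π C x i = realizedCost πh πl π C x Finset.univ) ∧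
      ∀ S : Finset ι, ∑ i ∈ S, xiAlloc πh πl π C x i ≤ realizedCost πh πl π C x S := by
  have key : ∀ S : Finset ι, ∑ i ∈ S, xiAlloc πh πl π C x i ≤ realizedCost πh πl π C x S := by
    intro S
    unfold xiAlloc realizedCost
    by_cases h : (∑ j, C j) ≤ ∑ j, x j
    · simp only [if_pos h, Finset.sum_add_distrib, Finset.sum_sub_distrib, ← Finset.mul_sum]
      rcases le_total (∑ i ∈ S, C i) (∑ i ∈ S, x i) with hS | hS
      · rw [max_eq_left (by linarith), min_eq_left hS]
      · rw [max_eq_right (by linarith), min_eq_right hS]; nlinarith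
    · simp only [if_neg h, Finset.sum_add_distrib, ← Finset.mul_sum]
      rcases le_total (∑ i ∈ S, C i) (∑ i ∈ S, x i) with hS | hS
      · rw [max_eq_left (by linarith), min_eq_left hS]; nlinarith
      · rw [max_eq_right (by linarith), min_eq_right hS]; linarith
  refine ⟨?_, key⟩
  unfold xiAlloc realizedCost
  by_cases h : (∑ j, C j) ≤ ∑ j, x j
  · simp only [if_pos h, Finset.sum_add_distrib, Finset.sum_sub_distrib, ← Finset.mul_sum]
    rw [max_eq_left (by linarith), min_eq_left h]
  · push_neg at h
    simp only [if_neg (not_le.mpr h), Finset.sum_add_distrib, ← Finset.mul_sum]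
    rw [max_eq_right (by linarith), min_eq_right h.le]; ring
end

section
/- For every coalition S ⊆ N, the total allocated cost satisfies the exact identity: Σ_{i∈S} ξ_i = u(S) − π_δ·max(C_S − x_S, 0) if x_N ≥ C_N, and Σ_{i∈S} ξ_i = u(S) − π_δ·max(x_S − C_S, 0) if x_N < C_N, where π_δ = π_h − π_ℓ. In particular, taking S = {i} gives the individual reduction in realized cost under the allocation ξ. -/
open Finset

/-- exact identity for the allocated cost of any coalition `S`:
`Σ_{i∈S} ξ_i = u(S) − π_δ·(C_S − x_S)⁺` if `x_N ≥ C_N`, and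
`Σ_{i∈S} ξ_i = u(S) − π_δ·(x_S − C_S)⁺` if `x_N < C_N`, where `π_δ = πh − πl`. -/
theorem xiAlloc_coalition_identity
    {ι : Type*} [Fintype ι] (πh πl : ℝ) (hprices : πl < πh) (hπl : 0 ≤ πl)
    (π C x : ι → ℝ) (hπ : ∀ i, 0 ≤ π i) (hC : ∀ i, 0 ≤ C i) (hx : ∀ i, 0 ≤ x i)
    (S : Finset ι) :
    ((∑ j, C j) ≤ (∑ j, x j) →
      ∑ i ∈ S, xiAlloc πh πl π C x i =
        realizedCost πh πl π C x S
          - (πh - πl) * max ((∑ i ∈ S, C i) - ∑ i ∈ S, x i) 0) ∧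
    ((∑ j, x j) < (∑ j, C j) →
      ∑ i ∈ S, xiAlloc πh πl π C x i =
        realizedCost πh πl π C x S
          - (πh - πl) * max ((∑ i ∈ S, x i) - ∑ i ∈ S, C i) 0) := by
  constructor
  · intro h
    simp only [xiAlloc, realizedCost, if_pos h, Finset.sum_add_distrib,
      ← Finset.mul_sum, Finset.sum_sub_distrib]
    rcases le_total (∑ i ∈ S, x i) (∑ i ∈ S, C i) with hS | hS
    · rw [max_eq_right (by linarith), max_eq_left (by linarith),
        min_eq_right hS]; ring
    · rw [max_eq_left (by linarith), max_eq_right (by linarith),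
        min_eq_left hS]; ring
  · intro h
    simp only [xiAlloc, realizedCost, if_neg (not_le.mpr h),
      Finset.sum_add_distrib, ← Finset.mul_sum]
    rcases le_total (∑ i ∈ S, x i) (∑ i ∈ S, C i) with hS | hS
    · rw [max_eq_right (by linarith), min_eq_right hS]; ring
    · rw [max_eq_left (by linarith), min_eq_left hS]; ring
end

section
/- If C* ≥ 0 satisfies P(Z ≤ C*) = γ and P(Z ≥ C*) = π_s/π_δ (i.e., the distribution of Z puts no mass at C*), then the minimal expected daily storage cost equals G(Z, C*) = π_ℓ·E[Z] + π_s·E[Z | Z ≥ C*], where E[Z | Z ≥ C*] = E[Z·1{Z ≥ C*}]/P(Z ≥ C*). -/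
open MeasureTheory

/-- Expected daily storage cost for demand `Z` and capacity `C`:
`G(Z, C) = πs·C + πh·E[(Z − C)⁺] + πl·E[min(C, Z)]`. -/
noncomputable def expCost {Ω : Type*} [MeasurableSpace Ω] (μ : Measure Ω)
    (πh πl πs : ℝ) (Z : Ω → ℝ) (C : ℝ) : ℝ :=
  πs * C + πh * ∫ ω, max (Z ω - C) 0 ∂μ + πl * ∫ ω, min C (Z ω) ∂μ

lemma core_cost {Ω : Type*} [MeasurableSpace Ω] (μ : Measure Ω) [IsProbabilityMeasure μ]
    (πh πl πs : ℝ) (hπd : 0 < πh - πl) (hπs0 : 0 < πs)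
    (Z : Ω → ℝ) (hZm : Measurable Z) (hZint : Integrable Z μ) (C : ℝ)
    (htail : μ {ω | C ≤ Z ω} = ENNReal.ofReal (πs / (πh - πl))) :
    πs * C + πh * ∫ ω, max (Z ω - C) 0 ∂μ + πl * ∫ ω, min C (Z ω) ∂μ
      = πl * ∫ ω, Z ω ∂μ
        + πs * ((∫ ω in {ω | C ≤ Z ω}, Z ω ∂μ) / (μ {ω | C ≤ Z ω}).toReal) := by
  set A : Set Ω := {ω | C ≤ Z ω} with hA
  have hAm : MeasurableSet A := measurableSet_le measurable_const hZm
  have ht : (μ A).toReal = πs / (πh - πl) := by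
    rw [htail, ENNReal.toReal_ofReal (by positivity)]
  have hmaxInt : Integrable (fun ω => max (Z ω - C) 0) μ :=
    (hZint.sub (integrable_const C)).pos_part
  have hM : ∫ ω, max (Z ω - C) 0 ∂μ = (∫ ω in A, Z ω ∂μ) - C * (μ A).toReal := by
    have hpt : (fun ω => max (Z ω - C) 0) = A.indicator (fun ω => Z ω - C) := by
      funext ω
      by_cases h : C ≤ Z ω
      · rw [Set.indicator_of_mem (show ω ∈ A from h), max_eq_left (by linarith)]
      · rw [Set.indicator_of_notMem (show ω ∉ A from h), max_eq_right (by push_neg at h; linarith)]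
    rw [hpt, integral_indicator hAm,
      integral_sub hZint.integrableOn (integrableOn_const (measure_lt_top μ A).ne),
      setIntegral_const]
    ring_nf
    simp [mul_comm, Measure.real]
  have hmin : ∫ ω, min C (Z ω) ∂μ = (∫ ω, Z ω ∂μ) - ∫ ω, max (Z ω - C) 0 ∂μ := by
    rw [← integral_sub hZint hmaxInt]
    congr 1; funext ω
    rcases le_total C (Z ω) with h | h
    · rw [min_eq_left h, max_eq_left (by linarith)]; ring
    · rw [min_eq_right h, max_eq_right (by linarith)]; ring
  rw [hM, hmin, hM, ht]
  have : πs / (πh - πl) ≠ 0 := by positivity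
  field_simp
  ring

/-- if `C* ≥ 0` satisfies `P(Z ≤ C*) = γ = (π_δ − πs)/π_δ` and
`P(Z ≥ C*) = πs/π_δ` (no mass at `C*`), then the minimal expected daily storage
cost equals `G(Z, C*) = πl·E[Z] + πs·E[Z ∣ Z ≥ C*]`, where
`E[Z ∣ Z ≥ C*] = E[Z·1{Z ≥ C*}]/P(Z ≥ C*)`. -/
theorem optimal_expected_cost_formula
    {Ω : Type*} [MeasurableSpace Ω] (μ : Measure Ω) [IsProbabilityMeasure μ]
    (πh πl πs : ℝ) (hprices : πl < πh) (hπl : 0 ≤ πl)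
    (hπs0 : 0 < πs) (hπs1 : πs ≤ πh - πl)
    (Z : Ω → ℝ) (hZint : Integrable Z μ) (hZ0 : ∀ ω, 0 ≤ Z ω)
    (Cstar : ℝ) (hCstar : 0 ≤ Cstar)
    (hquantile : μ {ω | Z ω ≤ Cstar}
      = ENNReal.ofReal ((πh - πl - πs) / (πh - πl)))
    (htail : μ {ω | Cstar ≤ Z ω} = ENNReal.ofReal (πs / (πh - πl))) :
    expCost μ πh πl πs Z Cstar =
      πl * ∫ ω, Z ω ∂μ
        + πs * ((∫ ω in {ω | Cstar ≤ Z ω}, Z ω ∂μ)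
            / (μ {ω | Cstar ≤ Z ω}).toReal) := by
  set Z' := hZint.1.mk Z with hZ'
  have hZ'm : Measurable Z' := hZint.1.measurable_mk
  have hae : Z =ᵐ[μ] Z' := hZint.1.ae_eq_mk
  have hZ'int : Integrable Z' μ := hZint.congr hae
  have hAA' : {ω | Cstar ≤ Z ω} =ᵐ[μ] {ω | Cstar ≤ Z' ω} := by
    filter_upwards [hae] with ω h
    change (Cstar ≤ Z ω) = (Cstar ≤ Z' ω)
    rw [h]
  have hμeq : μ {ω | Cstar ≤ Z ω} = μ {ω | Cstar ≤ Z' ω} := measure_congr hAA'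
  have hset : (∫ ω in {ω | Cstar ≤ Z ω}, Z ω ∂μ)
      = ∫ ω in {ω | Cstar ≤ Z' ω}, Z' ω ∂μ := by
    rw [setIntegral_congr_set hAA']
    exact integral_congr_ae (ae_restrict_of_ae hae)
  have hmaxeq : (∫ ω, max (Z ω - Cstar) 0 ∂μ) = ∫ ω, max (Z' ω - Cstar) 0 ∂μ :=
    integral_congr_ae (by filter_upwards [hae] with ω h; rw [h])
  have hmineq : (∫ ω, min Cstar (Z ω) ∂μ) = ∫ ω, min Cstar (Z' ω) ∂μ :=
    integral_congr_ae (by filter_upwards [hae] with ω h; rw [h])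
  have hZeq : (∫ ω, Z ω ∂μ) = ∫ ω, Z' ω ∂μ := integral_congr_ae hae
  rw [expCost, hmaxeq, hmineq, hZeq, hset, hμeq]
  exact core_cost μ πh πl πs (by linarith) hπs0 Z' hZ'm hZ'int Cstar
    (hμeq ▸ htail)
end

section
/- For any two nonnegative integrable random variables X and Y on a common probability space, the minimal expected storage cost is subadditive: Φ(X + Y) ≤ Φ(X) + Φ(Y). Consequently, the cooperative game (N, v) with v(S) = Φ(Σ_{i∈S} x_i) for nonnegative integrable peak consumptions x_i is subadditive over disjoint coalitions. -/
open MeasureTheory Finset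

/-- Minimal expected storage cost: `Φ(Z) = inf_{C ≥ 0} G(Z, C)`. -/
noncomputable def minExpCost {Ω : Type*} [MeasurableSpace Ω] (μ : Measure Ω)
    (πh πl πs : ℝ) (Z : Ω → ℝ) : ℝ :=
  sInf ((fun C => expCost μ πh πl πs Z C) '' Set.Ici (0 : ℝ))

lemma expCost_eq {Ω : Type*} [MeasurableSpace Ω] (μ : Measure Ω) [IsProbabilityMeasure μ]
    (πh πl πs : ℝ) (Z : Ω → ℝ) (hZ : Integrable Z μ) (C : ℝ) :
    expCost μ πh πl πs Z C
      = πs * C + (πh - πl) * ∫ ω, max (Z ω - C) 0 ∂μ + πl * ∫ ω, Z ω ∂μ := by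
  have h1 : Integrable (fun ω => max (Z ω - C) 0) μ :=
    (hZ.sub (integrable_const C)).pos_part
  have h2 : ∀ ω, min C (Z ω) = Z ω - max (Z ω - C) 0 := by
    intro ω
    rcases le_total C (Z ω) with h | h
    · rw [min_eq_left h, max_eq_left (by linarith)]; ring
    · rw [min_eq_right h, max_eq_right (by linarith)]; ring
  unfold expCost
  simp_rw [h2]
  rw [integral_sub hZ h1]
  ring

lemma expCost_nonneg {Ω : Type*} [MeasurableSpace Ω] (μ : Measure Ω)
    (πh πl πs : ℝ) (hπh : 0 ≤ πh) (hπl : 0 ≤ πl) (hπs : 0 ≤ πs)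
    (Z : Ω → ℝ) (hZ0 : ∀ ω, 0 ≤ Z ω) (C : ℝ) (hC : 0 ≤ C) :
    0 ≤ expCost μ πh πl πs Z C := by
  have a1 : 0 ≤ ∫ ω, max (Z ω - C) 0 ∂μ :=
    integral_nonneg fun ω => le_max_right _ _
  have a2 : 0 ≤ ∫ ω, min C (Z ω) ∂μ :=
    integral_nonneg fun ω => le_min hC (hZ0 ω)
  have := mul_nonneg hπh a1
  have := mul_nonneg hπl a2
  have := mul_nonneg hπs hC
  unfold expCost; linarith

lemma expCost_add_le {Ω : Type*} [MeasurableSpace Ω] (μ : Measure Ω) [IsProbabilityMeasure μ]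
    (πh πl πs : ℝ) (hp : πl ≤ πh) (X Y : Ω → ℝ)
    (hX : Integrable X μ) (hY : Integrable Y μ) (C1 C2 : ℝ) :
    expCost μ πh πl πs (fun ω => X ω + Y ω) (C1 + C2)
      ≤ expCost μ πh πl πs X C1 + expCost μ πh πl πs Y C2 := by
  rw [expCost_eq μ πh πl πs (fun ω => X ω + Y ω) (hX.add hY), expCost_eq μ πh πl πs X hX,
    expCost_eq μ πh πl πs Y hY]
  have hI1 : Integrable (fun ω => max (X ω + Y ω - (C1 + C2)) 0) μ :=
    ((hX.add hY).sub (integrable_const (C1 + C2))).pos_part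
  have hI2 : Integrable (fun ω => max (X ω - C1) 0) μ :=
    (hX.sub (integrable_const C1)).pos_part
  have hI3 : Integrable (fun ω => max (Y ω - C2) 0) μ :=
    (hY.sub (integrable_const C2)).pos_part
  have hle : ∫ ω, max (X ω + Y ω - (C1 + C2)) 0 ∂μ
      ≤ (∫ ω, max (X ω - C1) 0 ∂μ) + ∫ ω, max (Y ω - C2) 0 ∂μ := by
    rw [← integral_add hI2 hI3]
    refine integral_mono hI1 (hI2.add hI3) fun ω => ?_
    dsimp only
    refine max_le ?_ (add_nonneg (le_max_right _ _) (le_max_right _ _))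
    have := le_max_left (X ω - C1) (0 : ℝ)
    have := le_max_left (Y ω - C2) (0 : ℝ)
    linarith
  rw [integral_add hX hY]
  have hm := mul_le_mul_of_nonneg_left hle (sub_nonneg.mpr hp)
  rw [mul_add] at hm
  linarith

lemma minExpCost_add_le {Ω : Type*} [MeasurableSpace Ω] (μ : Measure Ω) [IsProbabilityMeasure μ]
    (πh πl πs : ℝ) (hprices : πl < πh) (hπl : 0 ≤ πl) (hπs : 0 ≤ πs)
    (X Y : Ω → ℝ) (hX : Integrable X μ) (hY : Integrable Y μ)
    (hX0 : ∀ ω, 0 ≤ X ω) (hY0 : ∀ ω, 0 ≤ Y ω) :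
    minExpCost μ πh πl πs (fun ω => X ω + Y ω) ≤
      minExpCost μ πh πl πs X + minExpCost μ πh πl πs Y := by
  have hπh : 0 ≤ πh := le_of_lt (lt_of_le_of_lt hπl hprices)
  have hne_X : ((fun C => expCost μ πh πl πs X C) '' Set.Ici 0).Nonempty :=
    ⟨_, ⟨0, Set.self_mem_Ici, rfl⟩⟩
  have hne_Y : ((fun C => expCost μ πh πl πs Y C) '' Set.Ici 0).Nonempty :=
    ⟨_, ⟨0, Set.self_mem_Ici, rfl⟩⟩
  have hbdd : BddBelow ((fun C => expCost μ πh πl πs (fun ω => X ω + Y ω) C) '' Set.Ici 0) := by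
    refine ⟨0, ?_⟩
    rintro a ⟨C, hC, rfl⟩
    exact expCost_nonneg μ πh πl πs hπh hπl hπs _ (fun ω => add_nonneg (hX0 ω) (hY0 ω)) C hC
  have key : ∀ a ∈ (fun C => expCost μ πh πl πs X C) '' Set.Ici 0,
      ∀ b ∈ (fun C => expCost μ πh πl πs Y C) '' Set.Ici 0,
      minExpCost μ πh πl πs (fun ω => X ω + Y ω) ≤ a + b := by
    rintro a ⟨C1, hC1, rfl⟩ b ⟨C2, hC2, rfl⟩
    refine le_trans (csInf_le hbdd ⟨C1 + C2, Set.mem_Ici.mpr (add_nonneg (Set.mem_Ici.mp hC1) (Set.mem_Ici.mp hC2)), rfl⟩) ?_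
    exact expCost_add_le μ πh πl πs (le_of_lt hprices) X Y hX hY C1 C2
  have h1 : minExpCost μ πh πl πs (fun ω => X ω + Y ω) - minExpCost μ πh πl πs Y
      ≤ minExpCost μ πh πl πs X := by
    refine le_csInf hne_X fun a ha => ?_
    have h2 : minExpCost μ πh πl πs (fun ω => X ω + Y ω) - a ≤ minExpCost μ πh πl πs Y :=
      le_csInf hne_Y fun b hb => by linarith [key a ha b hb]
    linarith
  linarith

/-- the minimal expected storage cost is subadditive:
`Φ(X + Y) ≤ Φ(X) + Φ(Y)` for nonnegative integrable `X, Y`; consequently the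
cooperative game `(N, v)` with `v(S) = Φ(Σ_{i∈S} x_i)` is subadditive over
disjoint coalitions. -/
theorem minExpCost_subadditive
    {Ω ι : Type*} [MeasurableSpace Ω] [DecidableEq ι]
    (μ : Measure Ω) [IsProbabilityMeasure μ]
    (πh πl πs : ℝ) (hprices : πl < πh) (hπl : 0 ≤ πl) (hπs : 0 ≤ πs) :
    (∀ X Y : Ω → ℝ, Integrable X μ → Integrable Y μ →
      (∀ ω, 0 ≤ X ω) → (∀ ω, 0 ≤ Y ω) →
      minExpCost μ πh πl πs (fun ω => X ω + Y ω) ≤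
        minExpCost μ πh πl πs X + minExpCost μ πh πl πs Y) ∧
    (∀ x : ι → Ω → ℝ, (∀ i, Integrable (x i) μ) → (∀ i ω, 0 ≤ x i ω) →
      ∀ S T : Finset ι, Disjoint S T →
      minExpCost μ πh πl πs (fun ω => ∑ i ∈ S ∪ T, x i ω) ≤
        minExpCost μ πh πl πs (fun ω => ∑ i ∈ S, x i ω)
          + minExpCost μ πh πl πs (fun ω => ∑ i ∈ T, x i ω)) := by
  constructor
  · exact fun X Y hX hY hX0 hY0 =>
      minExpCost_add_le μ πh πl πs hprices hπl hπs X Y hX hY hX0 hY0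
  · intro x hint hnn S T hST
    have hfun : (fun ω => ∑ i ∈ S ∪ T, x i ω)
        = fun ω => (∑ i ∈ S, x i ω) + ∑ i ∈ T, x i ω := by
      funext ω; exact Finset.sum_union hST
    rw [hfun]
    exact minExpCost_add_le μ πh πl πs hprices hπl hπs _ _
      (integrable_finset_sum S fun i _ => hint i)
      (integrable_finset_sum T fun i _ => hint i)
      (fun ω => Finset.sum_nonneg fun i _ => hnn i ω)
      (fun ω => Finset.sum_nonneg fun i _ => hnn i ω)
end

section
/- Suppose the grand-coalition optimal capacity C*_N ≥ 0 satisfies P(x_N ≥ C*_N) = π_s/π_δ. Then for every coalition S ⊆ N, the expected-cost allocation ζ satisfies Σ_{i∈S} ζ_i ≤ Φ(x_S), where x_S = Σ_{i∈S} x_i. Combined with budget balance, the allocation ζ belongs to the core of the cost-sharing cooperative game (N, v) with v(S) = Φ(x_S). -/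
open MeasureTheory Finset

/-- Allocation 2: `ζ_i = πl·E[x_i] + πs·E[x_i ∣ x_N ≥ C*_N]`, where
`E[x_i ∣ x_N ≥ C*_N] = E[x_i·1{x_N ≥ C*_N}]/P(x_N ≥ C*_N)`. -/
noncomputable def zetaAlloc {Ω ι : Type*} [MeasurableSpace Ω] [Fintype ι]
    (μ : Measure Ω) (πl πs : ℝ) (x : ι → Ω → ℝ) (CstarN : ℝ) (i : ι) : ℝ :=
  πl * ∫ ω, x i ω ∂μ
    + πs * ((∫ ω in {ω | CstarN ≤ ∑ j, x j ω}, x i ω ∂μ)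
        / (μ {ω | CstarN ≤ ∑ j, x j ω}).toReal)

/-- if the grand-coalition optimal capacity `C*_N ≥ 0` satisfies
`P(x_N ≥ C*_N) = πs/π_δ`, then for every coalition `S ⊆ N`,
`Σ_{i∈S} ζ_i ≤ Φ(x_S)`; combined with budget balance, the allocation `ζ`
belongs to the core of the game `(N, v)` with `v(S) = Φ(x_S)`. -/
theorem zetaAlloc_coalition_stable
    {Ω ι : Type*} [MeasurableSpace Ω] [Fintype ι]
    (μ : Measure Ω) [IsProbabilityMeasure μ]
    (πh πl πs : ℝ) (hprices : πl < πh) (hπl : 0 ≤ πl)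
    (hπs0 : 0 < πs) (hπs1 : πs < πh - πl)
    (x : ι → Ω → ℝ) (hxint : ∀ i, Integrable (x i) μ) (hx0 : ∀ i ω, 0 ≤ x i ω)
    (CstarN : ℝ) (hCstarN : 0 ≤ CstarN)
    (htail : μ {ω | CstarN ≤ ∑ i, x i ω} = ENNReal.ofReal (πs / (πh - πl))) :
    ∀ S : Finset ι, ∑ i ∈ S, zetaAlloc μ πl πs x CstarN i ≤
      minExpCost μ πh πl πs (fun ω => ∑ i ∈ S, x i ω) := by
  intro S
  set A : Set Ω := {ω | CstarN ≤ ∑ i, x i ω} with hA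
  set f : Ω → ℝ := fun ω => ∑ i ∈ S, x i ω with hfdef
  have hδ : 0 < πh - πl := sub_pos.mpr hprices
  have hfint : Integrable f μ := integrable_finset_sum _ (fun i _ => hxint i)
  have hp : (μ A).toReal = πs / (πh - πl) := by
    rw [htail, ENNReal.toReal_ofReal (by positivity)]
  have hsum : ∑ i ∈ S, zetaAlloc μ πl πs x CstarN i
      = πl * ∫ ω, f ω ∂μ + (πh - πl) * ∫ ω in A, f ω ∂μ := by
    unfold zetaAlloc
    rw [Finset.sum_add_distrib, ← Finset.mul_sum, ← Finset.mul_sum]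
    have h1 : ∑ i ∈ S, ∫ ω, x i ω ∂μ = ∫ ω, f ω ∂μ := by
      rw [integral_finset_sum _ (fun i _ => hxint i)]
    have h2 : ∑ i ∈ S, (∫ ω in A, x i ω ∂μ) / (μ A).toReal
        = (∫ ω in A, f ω ∂μ) / (μ A).toReal := by
      rw [← Finset.sum_div, integral_finset_sum _ (fun i _ => (hxint i).restrict)]
    rw [h1, h2, hp]
    have hπs : πs ≠ 0 := ne_of_gt hπs0
    have hδ' : πh - πl ≠ 0 := ne_of_gt hδ
    field_simp
  rw [hsum]
  refine le_csInf ⟨expCost μ πh πl πs f 0, ⟨0, Set.self_mem_Ici, rfl⟩⟩ ?_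
  rintro b ⟨C, hC, rfl⟩
  have hC0 : (0:ℝ) ≤ C := hC
  set g : Ω → ℝ := fun ω => max (f ω - C) 0 with hgdef
  have hgint : Integrable g μ := (hfint.sub (integrable_const C)).pos_part
  have hmin : ∀ ω, min C (f ω) = f ω - max (f ω - C) 0 := by
    intro ω; rcases le_total (f ω) C with h | h
    · rw [min_eq_right h, max_eq_right (sub_nonpos.mpr h), sub_zero]
    · rw [min_eq_left h, max_eq_left (sub_nonneg.mpr h)]; ring
  have hcost : expCost μ πh πl πs f C
      = πs * C + πl * ∫ ω, f ω ∂μ + (πh - πl) * ∫ ω, g ω ∂μ := by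
    unfold expCost
    have : ∫ ω, min C (f ω) ∂μ = ∫ ω, f ω ∂μ - ∫ ω, g ω ∂μ := by
      rw [← integral_sub hfint hgint]
      exact integral_congr_ae (Filter.Eventually.of_forall fun ω => hmin ω)
    rw [this]; ring
  have key : ∫ ω in A, f ω ∂μ ≤ (πs / (πh - πl)) * C + ∫ ω, g ω ∂μ := by
    have e1 : (πs / (πh - πl)) * C = ∫ _ω in A, C ∂μ := by
      rw [setIntegral_const, smul_eq_mul, measureReal_def, hp]
    rw [e1]
    have e2 : ∫ ω in A, f ω ∂μ - ∫ _ω in A, C ∂μ = ∫ ω in A, (f ω - C) ∂μ := by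
      rw [integral_sub hfint.restrict (integrable_const C)]
    have e3 : ∫ ω in A, (f ω - C) ∂μ ≤ ∫ ω in A, g ω ∂μ :=
      integral_mono ((hfint.sub (integrable_const C)).restrict) hgint.restrict
        (fun ω => le_max_left _ _)
    have e4 : ∫ ω in A, g ω ∂μ ≤ ∫ ω, g ω ∂μ :=
      setIntegral_le_integral hgint
        (Filter.Eventually.of_forall fun ω => le_max_right _ _)
    linarith
  show _ ≤ expCost μ πh πl πs f C
  rw [hcost]
  have := mul_le_mul_of_nonneg_left key (le_of_lt hδ)
  have hcc : (πh - πl) * ((πs / (πh - πl)) * C) = πs * C := by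
    field_simp
  nlinarith [this]
end

section
/- Suppose that for each consumer i ∈ S the individually optimal capacity C*_i ≥ 0 satisfies P(x_i ≤ C*_i) = γ and P(x_i ≥ C*_i) = π_s/π_δ, and that the coalition-optimal capacity C*_S ≥ 0 satisfies P(x_S ≤ C*_S) = γ and P(x_S ≥ C*_S) = π_s/π_δ, where x_S = Σ_{i∈S} x_i. Then the benefit of cooperation equals Σ_{i∈S} Φ(x_i) − Φ(x_S) = π_s·(Σ_{i∈S} E[x_i | x_i ≥ C*_i] − E[x_S | x_S ≥ C*_S]). -/
open MeasureTheory Finset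

/-- Conditional expectation `E[Z ∣ A] = E[Z·1_A]/P(A)`. -/
noncomputable def condExpOn {Ω : Type*} [MeasurableSpace Ω] (μ : Measure Ω)
    (Z : Ω → ℝ) (A : Set Ω) : ℝ :=
  (∫ ω in A, Z ω ∂μ) / (μ A).toReal

lemma expCost_rewrite {Ω : Type*} [MeasurableSpace Ω] (μ : Measure Ω) [IsFiniteMeasure μ]
    (πh πl πs : ℝ) (Z : Ω → ℝ) (hZ : Integrable Z μ) (c : ℝ) :
    expCost μ πh πl πs Z c
      = πs * c + (πh - πl) * ∫ ω, max (Z ω - c) 0 ∂μ + πl * ∫ ω, Z ω ∂μ := by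
  have hpos : Integrable (fun ω => max (Z ω - c) 0) μ :=
    (hZ.sub (integrable_const c)).pos_part
  have hmin : (fun ω => min c (Z ω)) = fun ω => Z ω - max (Z ω - c) 0 := by
    funext ω
    rcases le_total (Z ω) c with h | h
    · rw [min_eq_right h, max_eq_right (by linarith), sub_zero]
    · rw [min_eq_left h, max_eq_left (by linarith)]; ring
  rw [expCost, hmin, integral_sub hZ hpos]
  ring

lemma phi_meas {Ω : Type*} [MeasurableSpace Ω] (μ : Measure Ω) [IsProbabilityMeasure μ]
    (πh πl πs : ℝ) (hprices : πl < πh) (hπs0 : 0 < πs) (hπs1 : πs < πh - πl)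
    (Z : Ω → ℝ) (hZm : Measurable Z) (hZ : Integrable Z μ) (C : ℝ) (hC : 0 ≤ C)
    (hq : μ {ω | Z ω ≤ C} = ENNReal.ofReal ((πh - πl - πs) / (πh - πl)))
    (ht : μ {ω | C ≤ Z ω} = ENNReal.ofReal (πs / (πh - πl))) :
    minExpCost μ πh πl πs Z
      = πl * ∫ ω, Z ω ∂μ + (πh - πl) * ∫ ω in {ω | C ≤ Z ω}, Z ω ∂μ := by
  set πδ := πh - πl with hπδdef
  have hπδ : 0 < πδ := by linarith
  have hAmeas : MeasurableSet {ω | C ≤ Z ω} := measurableSet_le measurable_const hZm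
  have hA'meas : MeasurableSet {ω | C < Z ω} := measurableSet_lt measurable_const hZm
  have hp : (μ {ω | C ≤ Z ω}).toReal = πs / πδ := by
    rw [ht, ENNReal.toReal_ofReal (by positivity)]
  have hq0 : (0:ℝ) ≤ (πh - πl - πs) / (πh - πl) := div_nonneg (by linarith) (by linarith)
  -- μ {Z = C} = 0
  have hdiag : μ {ω | Z ω = C} = 0 := by
    have hsum := measure_union_add_inter {ω | Z ω ≤ C} hAmeas (μ := μ)
    have hu : {ω | Z ω ≤ C} ∪ {ω | C ≤ Z ω} = Set.univ := by
      ext ω; simpa using le_total (Z ω) C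
    have hi : {ω | Z ω ≤ C} ∩ {ω | C ≤ Z ω} = {ω | Z ω = C} := by
      ext ω; simp only [Set.mem_inter_iff, Set.mem_setOf_eq]
      constructor
      · rintro ⟨h1, h2⟩; exact le_antisymm h1 h2
      · rintro rfl; exact ⟨le_rfl, le_rfl⟩
    rw [hu, hi, hq, ht, measure_univ,
      ← ENNReal.ofReal_add hq0 (by positivity)] at hsum
    have h1 : (πh - πl - πs) / (πh - πl) + πs / (πh - πl) = 1 := by
      field_simp
      rw [sub_add_cancel, div_self (ne_of_gt (by linarith))]
    rw [h1, ENNReal.ofReal_one] at hsum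
    have h2 : (1 : ENNReal) + μ {ω | Z ω = C} = 1 + 0 := by rw [add_zero]; exact hsum
    exact (ENNReal.add_right_inj ENNReal.one_ne_top).mp h2
  have hp' : (μ {ω | C < Z ω}).toReal = πs / πδ := by
    have hsub1 : {ω | C < Z ω} ⊆ {ω | C ≤ Z ω} := fun ω (h : C < Z ω) => h.le
    have hle : μ {ω | C < Z ω} ≤ μ {ω | C ≤ Z ω} := measure_mono hsub1
    have hge : μ {ω | C ≤ Z ω} ≤ μ {ω | C < Z ω} := by
      have hsub : {ω | C ≤ Z ω} ⊆ {ω | C < Z ω} ∪ {ω | Z ω = C} := by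
        intro ω h
        have hle' : C ≤ Z ω := h
        rcases eq_or_lt_of_le hle' with h' | h'
        · exact Or.inr h'.symm
        · exact Or.inl h'
      calc μ {ω | C ≤ Z ω} ≤ μ ({ω | C < Z ω} ∪ {ω | Z ω = C}) := measure_mono hsub
        _ ≤ μ {ω | C < Z ω} + μ {ω | Z ω = C} := measure_union_le _ _
        _ = μ {ω | C < Z ω} := by rw [hdiag, add_zero]
    rw [le_antisymm hle hge, hp]
  -- optimality of C
  have hopt : ∀ c, 0 ≤ c → expCost μ πh πl πs Z C ≤ expCost μ πh πl πs Z c := by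
    intro c _
    rw [expCost_rewrite μ πh πl πs Z hZ, expCost_rewrite μ πh πl πs Z hZ]
    have hposC : Integrable (fun ω => max (Z ω - C) 0) μ :=
      (hZ.sub (integrable_const C)).pos_part
    have hposc : Integrable (fun ω => max (Z ω - c) 0) μ :=
      (hZ.sub (integrable_const c)).pos_part
    have hind : Integrable ({ω | C < Z ω}.indicator (fun _ => c - C)) μ :=
      (integrable_const (c - C)).indicator hA'meas
    have hptwise : ∀ ω, max (Z ω - C) 0
        ≤ max (Z ω - c) 0 + {ω | C < Z ω}.indicator (fun _ => c - C) ω := by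
      intro ω
      simp only [Set.indicator_apply, Set.mem_setOf_eq]
      by_cases h : C < Z ω
      · rw [if_pos h]
        have h1 : max (Z ω - C) 0 = Z ω - C := max_eq_left (by linarith)
        have h2 := le_max_left (Z ω - c) 0
        linarith
      · rw [if_neg h]
        have h1 : max (Z ω - C) 0 = 0 := max_eq_right (by push_neg at h; linarith)
        rw [h1, add_zero]
        exact le_max_right _ _
    have hint : ∫ ω, max (Z ω - C) 0 ∂μ
        ≤ ∫ ω, max (Z ω - c) 0 ∂μ + (c - C) * (πs / πδ) := by
      have hg : Integrable (fun ω => max (Z ω - c) 0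
          + {ω | C < Z ω}.indicator (fun _ => c - C) ω) μ := hposc.add hind
      have h2 := integral_mono hposC hg hptwise
      rwa [integral_add hposc hind, integral_indicator_const (c - C) hA'meas,
        measureReal_def, hp', smul_eq_mul, mul_comm] at h2
    have hkey : πδ * ((c - C) * (πs / πδ)) = πs * (c - C) := by
      field_simp
    nlinarith [hint, hπδ.le]
  -- minExpCost = expCost at C
  have hmem : expCost μ πh πl πs Z C ∈ (fun c => expCost μ πh πl πs Z c) '' Set.Ici (0 : ℝ) :=
    ⟨C, hC, rfl⟩
  have hmin : minExpCost μ πh πl πs Z = expCost μ πh πl πs Z C := by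
    rw [minExpCost]
    have hbdd : BddBelow ((fun c => expCost μ πh πl πs Z c) '' Set.Ici (0 : ℝ)) :=
      ⟨expCost μ πh πl πs Z C, by rintro y ⟨c, hc, rfl⟩; exact hopt c hc⟩
    refine le_antisymm (csInf_le hbdd hmem) (le_csInf ⟨_, hmem⟩ ?_)
    rintro y ⟨c, hc, rfl⟩; exact hopt c hc
  -- value of expCost at C
  have hindic : (fun ω => max (Z ω - C) 0)
      = {ω | C ≤ Z ω}.indicator (fun ω => Z ω - C) := by
    funext ω
    simp only [Set.indicator_apply, Set.mem_setOf_eq]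
    by_cases h : C ≤ Z ω
    · rw [if_pos h]; exact max_eq_left (by linarith)
    · rw [if_neg h]; exact max_eq_right (by push_neg at h; linarith)
  have hsetint : ∫ ω, max (Z ω - C) 0 ∂μ
      = (∫ ω in {ω | C ≤ Z ω}, Z ω ∂μ) - C * (πs / πδ) := by
    rw [hindic, integral_indicator hAmeas,
      integral_sub (hZ.integrableOn) (integrableOn_const (measure_ne_top μ _)),
      setIntegral_const, measureReal_def, hp, smul_eq_mul, mul_comm]
  rw [hmin, expCost_rewrite μ πh πl πs Z hZ, hsetint]
  have h3 : πδ * (C * (πs / πδ)) = πs * C := by field_simp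
  nlinarith [h3]

lemma phi_formula {Ω : Type*} [MeasurableSpace Ω] (μ : Measure Ω) [IsProbabilityMeasure μ]
    (πh πl πs : ℝ) (hprices : πl < πh) (hπs0 : 0 < πs) (hπs1 : πs < πh - πl)
    (Z : Ω → ℝ) (hZ : Integrable Z μ) (C : ℝ) (hC : 0 ≤ C)
    (hq : μ {ω | Z ω ≤ C} = ENNReal.ofReal ((πh - πl - πs) / (πh - πl)))
    (ht : μ {ω | C ≤ Z ω} = ENNReal.ofReal (πs / (πh - πl))) :
    minExpCost μ πh πl πs Z
      = πl * ∫ ω, Z ω ∂μ + πs * condExpOn μ Z {ω | C ≤ Z ω} := by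
  have hπδ : 0 < πh - πl := by linarith
  obtain ⟨Z', hZ'm, heq⟩ : ∃ Z', Measurable Z' ∧ Z =ᵐ[μ] Z' :=
    ⟨hZ.1.mk Z, hZ.1.stronglyMeasurable_mk.measurable, hZ.1.ae_eq_mk⟩
  have hZ' : Integrable Z' μ := hZ.congr heq
  have hsle : {ω | Z ω ≤ C} =ᵐ[μ] {ω | Z' ω ≤ C} := by
    filter_upwards [heq] with ω h
    show (Z ω ≤ C) = (Z' ω ≤ C); rw [h]
  have hsge : {ω | C ≤ Z ω} =ᵐ[μ] {ω | C ≤ Z' ω} := by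
    filter_upwards [heq] with ω h
    show (C ≤ Z ω) = (C ≤ Z' ω); rw [h]
  have hq' : μ {ω | Z' ω ≤ C} = ENNReal.ofReal ((πh - πl - πs) / (πh - πl)) := by
    rw [← measure_congr hsle]; exact hq
  have ht' : μ {ω | C ≤ Z' ω} = ENNReal.ofReal (πs / (πh - πl)) := by
    rw [← measure_congr hsge]; exact ht
  have hcost : ∀ c, expCost μ πh πl πs Z c = expCost μ πh πl πs Z' c := by
    intro c
    have h1 : ∫ ω, max (Z ω - c) 0 ∂μ = ∫ ω, max (Z' ω - c) 0 ∂μ :=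
      integral_congr_ae (by filter_upwards [heq] with ω h; rw [h])
    have h2 : ∫ ω, min c (Z ω) ∂μ = ∫ ω, min c (Z' ω) ∂μ :=
      integral_congr_ae (by filter_upwards [heq] with ω h; rw [h])
    rw [expCost, expCost, h1, h2]
  have hmincong : minExpCost μ πh πl πs Z = minExpCost μ πh πl πs Z' := by
    rw [minExpCost, minExpCost]
    congr 1
    ext y
    constructor
    · rintro ⟨c, hc, rfl⟩; exact ⟨c, hc, (hcost c).symm⟩
    · rintro ⟨c, hc, rfl⟩; exact ⟨c, hc, hcost c⟩
  have hintcong : ∫ ω, Z ω ∂μ = ∫ ω, Z' ω ∂μ := integral_congr_ae heq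
  have hsetcong : ∫ ω in {ω | C ≤ Z ω}, Z ω ∂μ = ∫ ω in {ω | C ≤ Z' ω}, Z' ω ∂μ := by
    rw [Measure.restrict_congr_set hsge]
    exact integral_congr_ae (ae_restrict_of_ae heq)
  have hmain := phi_meas μ πh πl πs hprices hπs0 hπs1 Z' hZ'm hZ' C hC hq' ht'
  rw [hmincong, hmain, ← hintcong, ← hsetcong]
  rw [condExpOn, ht, ENNReal.toReal_ofReal (by positivity)]
  have hπs : πs ≠ 0 := ne_of_gt hπs0
  field_simp

/-- if for each `i ∈ S` the individually optimal capacity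
`C*_i ≥ 0` satisfies `P(x_i ≤ C*_i) = γ` and `P(x_i ≥ C*_i) = πs/π_δ`, and the
coalition-optimal capacity `C*_S ≥ 0` satisfies `P(x_S ≤ C*_S) = γ` and
`P(x_S ≥ C*_S) = πs/π_δ`, then the benefit of cooperation equals
`Σ_{i∈S} Φ(x_i) − Φ(x_S) = πs·(Σ_{i∈S} E[x_i ∣ x_i ≥ C*_i] − E[x_S ∣ x_S ≥ C*_S])`. -/
theorem benefit_of_cooperation_formula
    {Ω ι : Type*} [MeasurableSpace Ω]
    (μ : Measure Ω) [IsProbabilityMeasure μ]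
    (πh πl πs : ℝ) (hprices : πl < πh) (hπl : 0 ≤ πl)
    (hπs0 : 0 < πs) (hπs1 : πs < πh - πl)
    (x : ι → Ω → ℝ) (hxint : ∀ i, Integrable (x i) μ) (hx0 : ∀ i ω, 0 ≤ x i ω)
    (S : Finset ι) (Cstar : ι → ℝ) (CstarS : ℝ)
    (hCstar0 : ∀ i ∈ S, 0 ≤ Cstar i)
    (hquantile : ∀ i ∈ S, μ {ω | x i ω ≤ Cstar i}
      = ENNReal.ofReal ((πh - πl - πs) / (πh - πl)))
    (htail : ∀ i ∈ S, μ {ω | Cstar i ≤ x i ω} = ENNReal.ofReal (πs / (πh - πl)))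
    (hCstarS0 : 0 ≤ CstarS)
    (hquantileS : μ {ω | (∑ i ∈ S, x i ω) ≤ CstarS}
      = ENNReal.ofReal ((πh - πl - πs) / (πh - πl)))
    (htailS : μ {ω | CstarS ≤ ∑ i ∈ S, x i ω}
      = ENNReal.ofReal (πs / (πh - πl))) :
    (∑ i ∈ S, minExpCost μ πh πl πs (x i))
        - minExpCost μ πh πl πs (fun ω => ∑ i ∈ S, x i ω) =
      πs * ((∑ i ∈ S, condExpOn μ (x i) {ω | Cstar i ≤ x i ω})
          - condExpOn μ (fun ω => ∑ i ∈ S, x i ω)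
              {ω | CstarS ≤ ∑ i ∈ S, x i ω}) := by
  have hXS : Integrable (fun ω => ∑ i ∈ S, x i ω) μ :=
    integrable_finset_sum S (fun i _ => hxint i)
  have hphi : ∀ i ∈ S, minExpCost μ πh πl πs (x i)
      = πl * ∫ ω, x i ω ∂μ + πs * condExpOn μ (x i) {ω | Cstar i ≤ x i ω} :=
    fun i hi => phi_formula μ πh πl πs hprices hπs0 hπs1 (x i) (hxint i)
      (Cstar i) (hCstar0 i hi) (hquantile i hi) (htail i hi)
  have hS : minExpCost μ πh πl πs (fun ω => ∑ i ∈ S, x i ω)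
      = πl * ∫ ω, (∑ i ∈ S, x i ω) ∂μ
        + πs * condExpOn μ (fun ω => ∑ i ∈ S, x i ω) {ω | CstarS ≤ ∑ i ∈ S, x i ω} :=
    phi_formula μ πh πl πs hprices hπs0 hπs1 (fun ω => ∑ i ∈ S, x i ω) hXS
      CstarS hCstarS0 hquantileS htailS
  rw [Finset.sum_congr rfl hphi, hS, integral_finset_sum S (fun i _ => hxint i),
    Finset.sum_add_distrib, ← Finset.mul_sum, ← Finset.mul_sum]
  ring
end
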